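/- arXiv:1701.03822 — 4 statements merged into one kernel-verified Lean document; each statement's English description precedes it below -/
import Mathlib

section
/- Let S have density f_S(s) = nⁿαⁿ e^{-nα/s}/(Γ(n) s^{n+1}) on (0,∞), and fix x ∈ (0,1) and a positive integer r. Then E[(S(2-2x)(2x-x²)^{S-1})^r] = [2(nα)^{(r+n)/2}(2-2x)^r / (Γ(n)(2x-x²)^r)] · (-1/(r ln(2x-x²)))^{(r-n)/2} · K_{r-n}(2√(-nαr ln(2x-x²))), where K_ν is the modified Bessel function of the second kind. -/
/-!
Writing `b = 2x - x²` and `γ = -r log b > 0`, the `r`-th power of the density estimate is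
`(2 - 2x)^r b^(-r) s^r e^(-γ s)`, so the moment is an inverse-gamma integral of
`s^(r-n-1) e^(-β/s - γ s)` with `β = nα`. The substitution `s = √(β/γ) t` symmetrises the
exponent to `-√(βγ) (t + 1/t)`, which is the integral representation of `K_(r-n)(2√(βγ))`.
-/

open MeasureTheory Set

/-- Modified Bessel function of the second kind, via its integral representation
`K_ν(x) = (1/2) ∫₀^∞ t^(ν-1) exp(-(x/2)(t + 1/t)) dt` (valid for `x > 0`). -/
noncomputable def besselK (ν x : ℝ) : ℝ :=
  (1/2) * ∫ t in Ioi (0:ℝ), t ^ (ν - 1) * Real.exp (-(x/2) * (t + 1/t))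

open Real

theorem integral_rpow_mul_exp_neg_mul_div_sub_div_mul (ν : ℝ) {c : ℝ} (hc : 0 < c) (k : ℝ) :
    ∫ s in Ioi (0:ℝ), s ^ (ν - 1) * exp (-(k * c / s) - k / c * s)
      = 2 * c ^ ν * besselK ν (2 * k) := by
  have hscale := integral_comp_mul_left_Ioi
    (fun s => s ^ (ν - 1) * exp (-(k * c / s) - k / c * s)) 0 hc
  rw [mul_zero, smul_eq_mul, eq_inv_mul_iff_mul_eq₀ hc.ne'] at hscale
  have hpt : ∀ t ∈ Ioi (0:ℝ), (c * t) ^ (ν - 1) * exp (-(k * c / (c * t)) - k / c * (c * t))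
      = c ^ (ν - 1) * (t ^ (ν - 1) * exp (-(2 * k / 2) * (t + 1 / t))) := by
    intro t ht
    rw [mul_rpow hc.le (le_of_lt ht)]
    field_simp
    ring_nf
  rw [← hscale, setIntegral_congr_fun measurableSet_Ioi hpt, integral_const_mul, besselK,
    rpow_sub_one hc.ne']
  field_simp

theorem integral_rpow_mul_exp_neg_div_sub_mul (ν : ℝ) {β γ : ℝ} (hβ : 0 < β) (hγ : 0 < γ) :
    ∫ s in Ioi (0:ℝ), s ^ (ν - 1) * exp (-(β / s) - γ * s)
      = 2 * (β / γ) ^ (ν / 2) * besselK ν (2 * √(β * γ)) := by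
  have hc : 0 < √(β / γ) := sqrt_pos.mpr (div_pos hβ hγ)
  have hkc : √(β * γ) * √(β / γ) = β := by
    rw [← sqrt_mul (mul_pos hβ hγ).le, show β * γ * (β / γ) = β ^ 2 by field_simp,
      sqrt_sq hβ.le]
  have hkdc : √(β * γ) / √(β / γ) = γ := by
    rw [← sqrt_div' _ (div_pos hβ hγ).le, show β * γ / (β / γ) = γ ^ 2 by field_simp,
      sqrt_sq hγ.le]
  have hcν : √(β / γ) ^ ν = (β / γ) ^ (ν / 2) := by
    rw [sqrt_eq_rpow, ← rpow_mul (div_pos hβ hγ).le]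
    ring_nf
  rw [← hcν, ← integral_rpow_mul_exp_neg_mul_div_sub_div_mul ν hc, hkc, hkdc]

theorem rpow_sub_one_pow {b : ℝ} (hb : 0 < b) (s : ℝ) (r : ℕ) :
    (b ^ (s - 1)) ^ r = exp (r * log b * s) / b ^ r := by
  rw [← rpow_natCast, ← rpow_mul hb.le, rpow_def_of_pos hb, ← rpow_natCast b r,
    rpow_def_of_pos hb, ← exp_sub]
  ring_nf

theorem integral_rpow_mul_exp_neg_mul_mul_invGamma_pdf (m a : ℝ) {β γ : ℝ}
    (hβ : 0 < β) (hγ : 0 < γ) :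
    ∫ s in Ioi (0:ℝ), s ^ m * exp (-(γ * s)) * (β ^ a * exp (-β / s) / (Gamma a * s ^ (a + 1)))
      = 2 * β ^ ((m + a) / 2) / (Gamma a * γ ^ ((m - a) / 2))
          * besselK (m - a) (2 * √(β * γ)) := by
  have hpt : ∀ s ∈ Ioi (0:ℝ),
      s ^ m * exp (-(γ * s)) * (β ^ a * exp (-β / s) / (Gamma a * s ^ (a + 1)))
        = β ^ a / Gamma a * (s ^ (m - a - 1) * exp (-(β / s) - γ * s)) := by
    intro s hs
    rw [sub_sub, rpow_sub hs, sub_eq_add_neg, exp_add, neg_div]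
    ring
  have hβpow : β ^ a * β ^ ((m - a) / 2) = β ^ ((m + a) / 2) := by
    rw [← rpow_add hβ]
    ring_nf
  rw [setIntegral_congr_fun measurableSet_Ioi hpt, integral_const_mul,
    integral_rpow_mul_exp_neg_div_sub_mul _ hβ hγ, div_rpow hβ.le hγ.le, ← hβpow]
  ring

theorem mle_pdf_moments (n : ℕ) (hn : 0 < n) (α : ℝ) (hα : 0 < α)
    (x : ℝ) (hx : x ∈ Ioo (0:ℝ) 1) (r : ℕ) (hr : 0 < r) :
    (∫ s in Ioi (0:ℝ),
        (s * (2 - 2*x) * (2*x - x^2) ^ (s - 1)) ^ r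
          * ((n:ℝ)^n * α^n * Real.exp (-((n:ℝ) * α) / s) / (Real.Gamma n * s^(n+1))))
      = 2 * ((n:ℝ) * α) ^ (((r:ℝ) + n) / 2) * (2 - 2*x) ^ r
          / (Real.Gamma n * (2*x - x^2) ^ r)
        * (-1 / ((r:ℝ) * Real.log (2*x - x^2))) ^ (((r:ℝ) - n) / 2)
        * besselK ((r:ℝ) - n)
            (2 * Real.sqrt (-((n:ℝ) * α * r * Real.log (2*x - x^2)))) := by
  obtain ⟨hx0, hx1⟩ := hx
  set b := 2*x - x^2
  have hb : 0 < b := by nlinarith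
  have hγ : 0 < -(r * log b) :=
    neg_pos.mpr (mul_neg_of_pos_of_neg (Nat.cast_pos.mpr hr) (log_neg hb (by nlinarith)))
  have hpt : ∀ s ∈ Ioi (0:ℝ),
      (s * (2 - 2*x) * b ^ (s - 1)) ^ r
          * ((n:ℝ)^n * α^n * exp (-((n:ℝ) * α) / s) / (Gamma n * s^(n+1)))
        = (2 - 2*x) ^ r / b ^ r * (s ^ (r:ℝ) * exp (-(-(r * log b) * s))
          * ((n * α) ^ (n:ℝ) * exp (-(n * α) / s) / (Gamma n * s ^ ((n:ℝ) + 1)))) := by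
    intro s _
    rw [mul_pow, mul_pow, rpow_sub_one_pow hb, rpow_natCast, rpow_natCast, mul_pow,
      ← Nat.cast_add_one, rpow_natCast, neg_mul, neg_neg]
    ring
  rw [setIntegral_congr_fun measurableSet_Ioi hpt, integral_const_mul,
    integral_rpow_mul_exp_neg_mul_mul_invGamma_pdf _ _ (by positivity) hγ,
    show -1 / (r * log b) = (-(r * log b))⁻¹ by rw [neg_div, one_div, inv_neg],
    inv_rpow hγ.le]
  ring_nf
end

section
/- Let S have density f_S(s) = nⁿαⁿ e^{-nα/s}/(Γ(n) s^{n+1}) on (0,∞), and fix x ∈ (0,1) and a positive integer r. Then E[(2x-x²)^{rS}] = [2(nα)^{n/2}/Γ(n)] · (-1/(r ln(2x-x²)))^{-n/2} · K_{-n}(2√(-nαr ln(2x-x²))). -/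
open MeasureTheory Set

theorem mle_cdf_moments (n : ℕ) (hn : 0 < n) (α : ℝ) (hα : 0 < α)
    (x : ℝ) (hx : x ∈ Ioo (0:ℝ) 1) (r : ℕ) (hr : 0 < r) :
    (∫ s in Ioi (0:ℝ),
        (2*x - x^2) ^ ((r:ℝ) * s)
          * ((n:ℝ)^n * α^n * Real.exp (-((n:ℝ) * α) / s) / (Real.Gamma n * s^(n+1))))
      = 2 * ((n:ℝ) * α) ^ ((n:ℝ) / 2) / Real.Gamma n
        * (-1 / ((r:ℝ) * Real.log (2*x - x^2))) ^ (-(n:ℝ) / 2)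
        * besselK (-(n:ℝ))
            (2 * Real.sqrt (-((n:ℝ) * α * r * Real.log (2*x - x^2)))) := by
  obtain ⟨hx0, hx1⟩ := hx
  have hb0 : (0:ℝ) < 2*x - x^2 := by nlinarith
  have hb1 : 2*x - x^2 < 1 := by nlinarith
  have hlogb : Real.log (2*x - x^2) < 0 := Real.log_neg hb0 hb1
  set L : ℝ := -Real.log (2*x - x^2) with hLdef
  have hL0 : 0 < L := by simp only [hLdef]; linarith
  have hlogbL : Real.log (2*x - x^2) = -L := by rw [hLdef]; ring
  set c : ℝ := (n:ℝ) * α with hcdef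
  have hc0 : 0 < c := by positivity
  have hr0 : (0:ℝ) < (r:ℝ) := by exact_mod_cast hr
  have hrL : 0 < (r:ℝ) * L := by positivity
  set a : ℝ := Real.sqrt (c / ((r:ℝ)*L)) with hadef
  have ha0 : 0 < a := Real.sqrt_pos.mpr (by positivity)
  have ha2 : a^2 = c / ((r:ℝ)*L) := Real.sq_sqrt (by positivity)
  set z : ℝ := Real.sqrt (c * ((r:ℝ)*L)) with hzdef
  have hz0 : 0 < z := Real.sqrt_pos.mpr (by positivity)
  have hza : (r:ℝ) * L * a = z := by
    rw [hzdef, ← Real.sqrt_sq (by positivity : (0:ℝ) ≤ (r:ℝ) * L * a)]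
    congr 1
    rw [mul_pow, ha2]
    field_simp
  have hca : c / a = z := by
    rw [hzdef, ← Real.sqrt_sq (by positivity : (0:ℝ) ≤ c / a)]
    congr 1
    rw [div_pow, ha2]
    field_simp
  have hΓ : 0 < Real.Gamma n := Real.Gamma_pos_of_pos (by exact_mod_cast hn)
  -- the Bessel argument
  have harg : -(c * r * Real.log (2*x - x^2)) = c * ((r:ℝ)*L) := by
    rw [hlogbL]; ring
  -- change of variables s = a * t
  have hcov := integral_comp_mul_left_Ioi
    (fun s => (2*x - x^2) ^ ((r:ℝ) * s)
        * ((n:ℝ)^n * α^n * Real.exp (-((n:ℝ) * α) / s) / (Real.Gamma n * s^(n+1))))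
    0 ha0
  rw [mul_zero] at hcov
  have hLHS : (∫ s in Ioi (0:ℝ),
      (2*x - x^2) ^ ((r:ℝ) * s)
        * ((n:ℝ)^n * α^n * Real.exp (-((n:ℝ) * α) / s) / (Real.Gamma n * s^(n+1))))
      = a * ∫ t in Ioi (0:ℝ), (2*x - x^2) ^ ((r:ℝ) * (a*t))
        * ((n:ℝ)^n * α^n * Real.exp (-((n:ℝ) * α) / (a*t))
            / (Real.Gamma n * (a*t)^(n+1))) := by
    rw [hcov, smul_eq_mul, ← mul_assoc, mul_inv_cancel₀ ha0.ne', one_mul]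
  rw [hLHS]
  -- rewrite the integrand pointwise
  have hpt : ∀ t ∈ Ioi (0:ℝ),
      (2*x - x^2) ^ ((r:ℝ) * (a*t))
        * ((n:ℝ)^n * α^n * Real.exp (-((n:ℝ) * α) / (a*t))
            / (Real.Gamma n * (a*t)^(n+1)))
      = (c^n / (Real.Gamma n * a^(n+1)))
          * (t ^ ((-(n:ℝ)) - 1)
              * Real.exp (-((2 * Real.sqrt (c * ((r:ℝ)*L)))/2) * (t + 1/t))) := by
    intro t ht
    have ht0 : (0:ℝ) < t := ht
    have e1 : (2*x - x^2) ^ ((r:ℝ) * (a*t)) = Real.exp (-(z * t)) := by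
      rw [Real.rpow_def_of_pos hb0, hlogbL]
      congr 1
      rw [← hza]; ring
    have e2 : Real.exp (-((n:ℝ) * α) / (a*t)) = Real.exp (-(z / t)) := by
      congr 1
      rw [← hca, ← hcdef]
      field_simp
    have e3 : t ^ ((-(n:ℝ)) - 1) = (t ^ (n+1))⁻¹ := by
      rw [show (-(n:ℝ)) - 1 = -((n:ℝ)+1) by ring, Real.rpow_neg ht0.le]
      congr 1
      rw [show ((n:ℝ)+1) = ((n+1:ℕ):ℝ) by push_cast; ring, Real.rpow_natCast]
    have e4 : -((2 * Real.sqrt (c * ((r:ℝ)*L)))/2) * (t + 1/t) = -(z*t) + -(z/t) := by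
      rw [← hzdef]; field_simp; ring
    rw [e1, e2, e3, e4, Real.exp_add, ← e2]
    rw [show (n:ℝ)^n * α^n = c^n by rw [hcdef, mul_pow], mul_pow a t]
    have hΓ' := hΓ.ne'
    have ht' := ht0.ne'
    have ha' := ha0.ne'
    field_simp
  rw [setIntegral_congr_fun measurableSet_Ioi hpt, integral_const_mul]
  -- identify the Bessel integral
  have hbes : (∫ t in Ioi (0:ℝ), t ^ ((-(n:ℝ)) - 1)
      * Real.exp (-((2 * Real.sqrt (c * ((r:ℝ)*L)))/2) * (t + 1/t)))
      = 2 * besselK (-(n:ℝ)) (2 * Real.sqrt (-(c * r * Real.log (2*x - x^2)))) := by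
    rw [harg, besselK]
    ring
  rw [hbes]
  -- final algebraic identity
  have hpowa : (a:ℝ)^(n+1) = (c / ((r:ℝ)*L)) ^ (((n:ℝ)+1)/2) := by
    rw [hadef, ← Real.rpow_natCast (Real.sqrt _) (n+1),
      Real.sqrt_eq_rpow, ← Real.rpow_mul (by positivity)]
    congr 1
    push_cast; ring
  have hinv : (-1 / ((r:ℝ) * Real.log (2*x - x^2))) = ((r:ℝ)*L)⁻¹ := by
    rw [hlogbL]; field_simp
  rw [hinv, hpowa]
  rw [Real.inv_rpow hrL.le, show (-(n:ℝ)/2) = -((n:ℝ)/2) by ring,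
    Real.rpow_neg hrL.le, inv_inv,
    Real.div_rpow hc0.le hrL.le,
    show (c:ℝ)^n = c ^ ((n:ℝ)) by rw [Real.rpow_natCast]]
  have hcn : c ^ ((n:ℝ)) = c ^ ((n:ℝ)/2) * c ^ ((n:ℝ)/2) := by
    rw [← Real.rpow_add hc0]; congr 1; ring
  have hcq : c ^ (((n:ℝ)+1)/2) = c ^ ((n:ℝ)/2) * c ^ ((1:ℝ)/2) := by
    rw [← Real.rpow_add hc0]; congr 1; ring
  have hrq : ((r:ℝ)*L) ^ (((n:ℝ)+1)/2) = ((r:ℝ)*L) ^ ((n:ℝ)/2) * ((r:ℝ)*L) ^ ((1:ℝ)/2) := by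
    rw [← Real.rpow_add hrL]; congr 1; ring
  have haeq : a = c ^ ((1:ℝ)/2) / ((r:ℝ)*L) ^ ((1:ℝ)/2) := by
    rw [hadef, Real.sqrt_eq_rpow, Real.div_rpow hc0.le hrL.le]
  rw [hcn, hcq, hrq, haeq]
  have h1 : (0:ℝ) < ((r:ℝ)*L) ^ ((1:ℝ)/2) := Real.rpow_pos_of_pos hrL _
  have h2 : (0:ℝ) < c ^ ((1:ℝ)/2) := Real.rpow_pos_of_pos hc0 _
  have h3 : (0:ℝ) < ((r:ℝ)*L) ^ ((n:ℝ)/2) := Real.rpow_pos_of_pos hrL _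
  have h4 : (0:ℝ) < c ^ ((n:ℝ)/2) := Real.rpow_pos_of_pos hc0 _
  field_simp
end

section
/- Fix x ∈ (0,1), n ≥ 2, α > 0, and let T ~ Gamma(n, α), b = ln(2x-x²) < 0. Then E[((T+b)/T)^{n-1} · 1{T > -b}] = (2x-x²)^α, i.e., the estimator F̃(x) = ((T + ln(2x-x²))/T)^{n-1} (taken as 0 when T ≤ -ln(2x-x²)) is unbiased for the Topp-Leone CDF F(x) = (2x-x²)^α. -/
/-!
Substituting `s = t + b` with `b = log (2x - x²) ≤ 0`, the factor `t ^ (n - 1)` of the Gamma density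
cancels the denominator of `((t + b) / t) ^ (n - 1)`, and `exp (-α t) = exp (α b) · exp (-α s)`.
What remains is `exp (α b)` times the Gamma integral `∫₀^∞ s ^ (n - 1) exp (-α s) ds = Γ(n) / αⁿ`,
whose constant is exactly cancelled by the normalisation `αⁿ / Γ(n)`; hence the expectation is
`exp (α b) = (2x - x²) ^ α`.
-/

open MeasureTheory Set Real

theorem setIntegral_Ioi_comp_add_right {E : Type*} [NormedAddCommGroup E] [NormedSpace ℝ E]
    (f : ℝ → E) (a c : ℝ) :
    ∫ t in Ioi a, f (t + c) = ∫ s in Ioi (a + c), f s := by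
  have := (measurePreserving_add_right volume c).setIntegral_preimage_emb
    (Homeomorph.addRight c).measurableEmbedding f (Ioi (a + c))
  rwa [preimage_add_const_Ioi, add_sub_cancel_right] at this

theorem integral_Ioi_pow_mul_exp_neg_mul {α : ℝ} (hα : 0 < α) {n : ℕ} (hn : 0 < n) :
    ∫ s in Ioi (0 : ℝ), s ^ (n - 1) * exp (-(α * s)) = Gamma n / α ^ n := by
  have hrpow : ∀ s : ℝ, s ^ ((n : ℝ) - 1) = s ^ (n - 1) := fun s => by
    rw [← Nat.cast_pred hn, rpow_natCast]
  simp_rw [← hrpow, integral_rpow_mul_exp_neg_mul_Ioi (Nat.cast_pos.mpr hn) hα, rpow_natCast,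
    one_div, inv_pow, inv_mul_eq_div]

theorem setIntegral_Ioi_div_pow_mul_gamma_density {α : ℝ} (hα : 0 < α) {n : ℕ} (hn : 0 < n)
    {b : ℝ} (hb : b ≤ 0) :
    ∫ t in Ioi (-b), ((t + b) / t) ^ (n - 1) * (α ^ n * t ^ (n - 1) * exp (-α * t) / Gamma n)
      = exp (α * b) := by
  calc _ = ∫ t in Ioi (-b),
          α ^ n * exp (α * b) / Gamma n * ((t + b) ^ (n - 1) * exp (-(α * (t + b)))) := by
        refine setIntegral_congr_fun measurableSet_Ioi fun t ht => ?_
        have ht0 : t ≠ 0 := (lt_of_le_of_lt (neg_nonneg.mpr hb) ht).ne'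
        have hexp : exp (-α * t) = exp (α * b) * exp (-(α * (t + b))) := by
          rw [← exp_add]; ring_nf
        rw [div_pow, hexp]
        field_simp
    _ = α ^ n * exp (α * b) / Gamma n * ∫ s in Ioi (0 : ℝ), s ^ (n - 1) * exp (-(α * s)) := by
        rw [integral_const_mul,
          setIntegral_Ioi_comp_add_right (fun s => s ^ (n - 1) * exp (-(α * s))), neg_add_cancel]
    _ = exp (α * b) := by
        have hΓ : Gamma n ≠ 0 := (Gamma_pos_of_pos (Nat.cast_pos.mpr hn)).ne'
        rw [integral_Ioi_pow_mul_exp_neg_mul hα hn]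
        field_simp

theorem umvue_cdf_unbiased (n : ℕ) (hn : 2 ≤ n) (α x : ℝ) (hα : 0 < α)
    (hx : x ∈ Ioo (0:ℝ) 1) :
    (∫ t in Ioi (-(Real.log (2*x - x^2))),
        ((t + Real.log (2*x - x^2)) / t) ^ (n-1)
          * (α^n * t^(n-1) * Real.exp (-α * t) / Real.Gamma n))
      = (2*x - x^2) ^ α := by
  obtain ⟨hx0, hx1⟩ := hx
  have hpos : 0 < 2 * x - x ^ 2 := by nlinarith
  have hlog : log (2 * x - x ^ 2) ≤ 0 := log_nonpos hpos.le (by nlinarith)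
  rw [setIntegral_Ioi_div_pow_mul_gamma_density hα (by omega) hlog, rpow_def_of_pos hpos, mul_comm]
end

section
/- With T ~ Gamma(n, α) and b = ln(2x-x²) < 0, E[((T+b)/T)^{2(n-1)} · 1{T > -b}] = (1/Γ(n)) Σ_{i=0}^{2n-2} C(2n-2, i) bⁱ α^{i} Γ(n-i, -αb), where Γ(s,x) is the upper incomplete gamma function; equivalently, the MSE of the UMVUE F̃(x) equals this expression minus (2x-x²)^{2α}. -/
open MeasureTheory Set Real Filter Topology Asymptotics

/-- Upper incomplete gamma function `Γ(s, x) = ∫ₓ^∞ t^(s-1) e^(-t) dt`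
(converges for any real `s` when `x > 0`). -/
noncomputable def upperGamma (s x : ℝ) : ℝ :=
  ∫ t in Ioi x, t ^ (s - 1) * Real.exp (-t)

lemma tendsto_pow_exp_zero (m : ℕ) {c : ℝ} (hc : 0 < c) :
    Tendsto (fun t : ℝ => t ^ m * Real.exp (-(c * t))) atTop (𝓝 0) := by
  have h := ((tendsto_pow_mul_exp_neg_atTop_nhds_zero m).comp
    (tendsto_id.const_mul_atTop hc)).const_mul (c⁻¹ ^ m)
  rw [mul_zero] at h
  refine h.congr fun t => ?_
  simp only [Function.comp_apply, id_eq]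
  rw [mul_pow, ← mul_assoc, ← mul_assoc, ← mul_pow, inv_mul_cancel₀ hc.ne', one_pow, one_mul]

lemma intOn_pow_exp (m : ℕ) {α : ℝ} (hα : 0 < α) (a : ℝ) :
    IntegrableOn (fun t : ℝ => t ^ m * Real.exp (-α * t)) (Ioi a) := by
  refine integrable_of_isBigO_exp_neg (b := α / 2) (half_pos hα)
    ((continuous_pow m).continuousOn.mul
      (Real.continuous_exp.comp (continuous_const.mul continuous_id)).continuousOn) ?_
  apply IsLittleO.isBigO
  rw [Asymptotics.isLittleO_iff_tendsto (fun t ht => absurd ht (Real.exp_ne_zero _))]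
  refine (tendsto_pow_exp_zero m (half_pos hα)).congr fun t => ?_
  rw [mul_div_assoc, ← Real.exp_sub]
  congr 2
  ring

lemma intOn_zpow_exp {a α : ℝ} (ha : 0 < a) (hα : 0 < α) (z : ℤ) :
    IntegrableOn (fun t : ℝ => t ^ z * Real.exp (-α * t)) (Ioi a) := by
  refine integrable_of_isBigO_exp_neg (b := α / 2) (half_pos hα) ?_ ?_
  · intro t ht
    have ht0 : t ≠ 0 := (lt_of_lt_of_le ha ht).ne'
    exact ((continuousAt_zpow₀ t z (Or.inl ht0)).continuousWithinAt.mul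
      (Real.continuous_exp.comp (continuous_const.mul continuous_id)).continuousWithinAt)
  · apply IsLittleO.isBigO
    rw [Asymptotics.isLittleO_iff_tendsto (fun t ht => absurd ht (Real.exp_ne_zero _))]
    have key : Tendsto (fun t : ℝ => t ^ z.toNat * Real.exp (-(α/2 * t))) atTop (𝓝 0) :=
      tendsto_pow_exp_zero _ (half_pos hα)
    refine squeeze_zero' ?_ ?_ key
    · filter_upwards [eventually_ge_atTop (1:ℝ)] with t ht
      have ht0 : (0:ℝ) < t := lt_of_lt_of_le one_pos ht
      rw [mul_div_assoc, ← Real.exp_sub]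
      have : -α * t - -(α/2) * t = -(α/2*t) := by ring
      rw [this]
      positivity
    · filter_upwards [eventually_ge_atTop (1:ℝ)] with t ht
      rw [mul_div_assoc, ← Real.exp_sub]
      have e1 : -α * t - -(α/2) * t = -(α/2*t) := by ring
      rw [e1]
      have hz : t ^ z ≤ t ^ z.toNat := by
        rw [← zpow_natCast t z.toNat]
        exact zpow_le_zpow_right₀ ht (Int.self_le_toNat z)
      exact mul_le_mul_of_nonneg_right hz (Real.exp_nonneg _)

lemma int_zpow_exp {a α : ℝ} (ha : 0 < a) (hα : 0 < α) (z : ℤ) :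
    ∫ t in Ioi a, t ^ z * Real.exp (-α * t)
      = α⁻¹ * α⁻¹ ^ z * upperGamma ((z : ℝ) + 1) (α * a) := by
  have h := integral_comp_mul_left_Ioi (fun u : ℝ => (α⁻¹ * u) ^ z * Real.exp (-u)) a hα
  simp only [smul_eq_mul] at h
  have e1 : ∀ t ∈ Ioi a, t ^ z * Real.exp (-α * t)
      = (α⁻¹ * (α * t)) ^ z * Real.exp (-(α * t)) := by
    intro t _
    rw [inv_mul_cancel_left₀ hα.ne', neg_mul]
  rw [setIntegral_congr_fun measurableSet_Ioi e1, h]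
  have e2 : ∀ u ∈ Ioi (α * a), (α⁻¹ * u) ^ z * Real.exp (-u)
      = α⁻¹ ^ z * (u ^ ((z : ℝ) + 1 - 1) * Real.exp (-u)) := by
    intro u hu
    have hu0 : (0:ℝ) < u := lt_trans (by positivity) hu
    rw [mul_zpow, add_sub_cancel_right, ← Real.rpow_intCast u z, mul_assoc]
  rw [setIntegral_congr_fun measurableSet_Ioi e2, integral_const_mul, upperGamma, mul_assoc]

lemma int_pow_exp_Ioi_zero {α : ℝ} (hα : 0 < α) (m : ℕ) :
    ∫ t in Ioi (0:ℝ), t ^ m * Real.exp (-α * t)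
      = (1/α) ^ (m+1) * Real.Gamma (m+1) := by
  have h := Real.integral_rpow_mul_exp_neg_mul_Ioi
    (a := (m:ℝ)+1) (r := α) (by positivity) hα
  have e : ((1/α):ℝ)^(m+1) = (1/α) ^ ((m:ℝ)+1) := by
    rw [← Real.rpow_natCast (1/α) (m+1)]; push_cast; ring_nf
  rw [e, ← h]
  refine setIntegral_congr_fun measurableSet_Ioi fun t ht => ?_
  rw [add_sub_cancel_right, neg_mul, Real.rpow_natCast]

lemma shift_Ioi (f : ℝ → ℝ) (a c : ℝ) :
    ∫ t in Ioi a, f t = ∫ s in Ioi (a - c), f (s + c) := by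
  rw [← integral_indicator measurableSet_Ioi, ← integral_indicator measurableSet_Ioi,
    ← integral_add_right_eq_self (Set.indicator (Ioi a) f) c]
  congr 1
  funext s
  by_cases h : a - c < s
  · rw [indicator_of_mem (by simp only [mem_Ioi]; linarith), indicator_of_mem (by simpa using h)]
  · rw [indicator_of_notMem (by simp only [mem_Ioi]; intro hh; exact h (by linarith)),
      indicator_of_notMem (by simpa using h)]

lemma int_shifted_pow_exp {α b : ℝ} (hα : 0 < α) (m : ℕ) :
    ∫ t in Ioi (-b), (t+b)^m * Real.exp (-α*t)
      = Real.exp (α*b) * ((1/α)^(m+1) * Real.Gamma (m+1)) := by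
  rw [shift_Ioi (fun t => (t+b)^m * Real.exp (-α*t)) (-b) (-b)]
  have h0 : -b - -b = (0:ℝ) := by ring
  rw [h0]
  have e : ∀ s ∈ Ioi (0:ℝ), (s + -b + b)^m * Real.exp (-α*(s + -b))
      = Real.exp (α*b) * (s^m * Real.exp (-α*s)) := by
    intro s _
    have h1 : -α * (s + -b) = -α*s + α*b := by ring
    have h2 : s + -b + b = s := by ring
    rw [h1, h2, Real.exp_add]; ring
  rw [setIntegral_congr_fun measurableSet_Ioi e, integral_const_mul, int_pow_exp_Ioi_zero hα]

lemma second_moment {α b : ℝ} (hα : 0 < α) (hb : b < 0) (k : ℕ) :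
    ∫ t in Ioi (-b), ((t + b) / t) ^ (2*k) * (α^(k+1) * t^k * Real.exp (-α * t) / Real.Gamma (k+1))
      = (1 / Real.Gamma (k+1))
          * ∑ i ∈ Finset.range (2*k + 1),
              (Nat.choose (2*k) i : ℝ) * b ^ i * α ^ i
                * upperGamma (((k:ℝ)+1) - i) (-α * b) := by
  have hnb : (0:ℝ) < -b := neg_pos.mpr hb
  have e : ∀ t ∈ Ioi (-b), ((t + b) / t) ^ (2*k) * (α^(k+1) * t^k * Real.exp (-α * t) / Real.Gamma (k+1))
      = ∑ i ∈ Finset.range (2*k+1),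
          ((Nat.choose (2*k) i : ℝ) * b^i * (α^(k+1) / Real.Gamma (k+1)))
            * (t ^ ((k:ℤ) - i) * Real.exp (-α * t)) := by
    intro t ht
    have ht0 : (0:ℝ) < t := lt_trans hnb ht
    have hsplit : (t + b)/t = b/t + 1 := by field_simp; ring
    rw [hsplit, add_pow, Finset.sum_mul]
    refine Finset.sum_congr rfl fun i hi => ?_
    rw [one_pow, div_pow, zpow_sub₀ ht0.ne', zpow_natCast, zpow_natCast]
    field_simp
  rw [setIntegral_congr_fun measurableSet_Ioi e]
  rw [integral_finset_sum (Finset.range (2*k+1))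
    (f := fun i => fun t : ℝ => ((Nat.choose (2*k) i : ℝ) * b^i * (α^(k+1) / Real.Gamma (k+1)))
      * (t ^ ((k:ℤ) - i) * Real.exp (-α * t)))
    (fun i _ => ((intOn_zpow_exp hnb hα ((k:ℤ) - i)).const_mul _)), Finset.mul_sum]
  refine Finset.sum_congr rfl fun i hi => ?_
  rw [integral_const_mul, int_zpow_exp hnb hα ((k:ℤ) - i)]
  have harg : (((k:ℤ) - i : ℤ) : ℝ) + 1 = ((k:ℝ)+1) - i := by push_cast; ring
  have hset : α * -b = -α * b := by ring
  rw [harg, hset]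
  have hconst : α^(k+1) * (α⁻¹ * α⁻¹ ^ ((k:ℤ) - i)) = α ^ i := by
    rw [inv_zpow, ← zpow_neg, ← zpow_natCast α (k+1), ← zpow_natCast α i,
      ← zpow_neg_one α, ← zpow_add₀ hα.ne', ← zpow_add₀ hα.ne']
    congr 1; push_cast; ring
  rw [← hconst]
  ring

set_option maxHeartbeats 1000000 in
lemma mse_lemma {α b : ℝ} (hα : 0 < α) (hb : b < 0) (k : ℕ) :
    ∫ t in Ioi (0:ℝ),
        ((if -b < t then ((t + b) / t) ^ k else 0) - Real.exp (α*b)) ^ 2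
          * (α^(k+1) * t^k * Real.exp (-α * t) / Real.Gamma ((k:ℝ)+1))
      = (∫ t in Ioi (-b), ((t + b) / t) ^ (2*k)
            * (α^(k+1) * t^k * Real.exp (-α * t) / Real.Gamma ((k:ℝ)+1)))
        - Real.exp (α*b)^2 := by
  have hnb : (0:ℝ) < -b := neg_pos.mpr hb
  have hΓ : 0 < Real.Gamma ((k:ℝ)+1) := Real.Gamma_pos_of_pos (by positivity)
  set Γr := Real.Gamma ((k:ℝ)+1) with hΓr
  set E := Real.exp (α*b) with hE
  set ρfun : ℝ → ℝ := fun t => α^(k+1) * t^k * Real.exp (-α * t) / Γr with hρfun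
  set hfun : ℝ → ℝ := fun t => if -b < t then ((t + b) / t) ^ k else 0 with hhfun
  have mh : Measurable hfun := by
    have hfi : hfun = (Ioi (-b)).indicator (fun t => ((t+b)/t)^k) := by
      funext t; rw [Set.indicator_apply]; simp only [hhfun, mem_Ioi]
    rw [hfi]
    exact (((measurable_id.add_const b).div measurable_id).pow_const k).indicator
      measurableSet_Ioi
  have mρ : Measurable ρfun := by
    exact ((measurable_const.mul (measurable_id.pow_const k)).mul
      ((measurable_id.const_mul (-α)).exp)).div_const Γr
  have hbound : ∀ t ∈ Ioi (0:ℝ), 0 ≤ hfun t ∧ hfun t ≤ 1 := by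
    intro t ht
    have ht0 : (0:ℝ) < t := ht
    simp only [hhfun]
    split_ifs with h
    · have h1 : 0 ≤ (t+b)/t := div_nonneg (by linarith) ht0.le
      have h2 : (t+b)/t ≤ 1 := (div_le_one ht0).mpr (by linarith)
      exact ⟨pow_nonneg h1 k, pow_le_one₀ h1 h2⟩
    · exact ⟨le_refl 0, zero_le_one⟩
  have Iρ : IntegrableOn ρfun (Ioi 0) := by
    refine ((intOn_pow_exp k hα 0).const_mul (α^(k+1)/Γr)).congr
      (Filter.Eventually.of_forall fun t => by simp only [hρfun]; ring)
  have Ihρ : IntegrableOn (fun t => hfun t * ρfun t) (Ioi 0) := by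
    refine MeasureTheory.Integrable.mono Iρ ((mh.mul mρ).aestronglyMeasurable) ?_
    filter_upwards [ae_restrict_mem measurableSet_Ioi] with t ht
    obtain ⟨h0, h1⟩ := hbound t ht
    rw [Real.norm_eq_abs, Real.norm_eq_abs, abs_mul]
    calc |hfun t| * |ρfun t| ≤ 1 * |ρfun t| := by
          apply mul_le_mul_of_nonneg_right _ (abs_nonneg _)
          rwa [abs_of_nonneg h0]
      _ = |ρfun t| := one_mul _
  have Ih2ρ : IntegrableOn (fun t => hfun t ^ 2 * ρfun t) (Ioi 0) := by
    refine MeasureTheory.Integrable.mono Iρ (((mh.pow_const 2).mul mρ).aestronglyMeasurable) ?_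
    filter_upwards [ae_restrict_mem measurableSet_Ioi] with t ht
    obtain ⟨h0, h1⟩ := hbound t ht
    rw [Real.norm_eq_abs, Real.norm_eq_abs, abs_mul]
    calc |hfun t ^ 2| * |ρfun t| ≤ 1 * |ρfun t| := by
          apply mul_le_mul_of_nonneg_right _ (abs_nonneg _)
          rw [abs_of_nonneg (pow_nonneg h0 2)]
          exact pow_le_one₀ h0 h1
      _ = |ρfun t| := one_mul _
  have hinter : Ioi (0:ℝ) ∩ Ioi (-b) = Ioi (-b) := by
    rw [Set.Ioi_inter_Ioi, sup_eq_right.mpr hnb.le]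
  have E1 : ∫ t in Ioi (0:ℝ), hfun t ^ 2 * ρfun t
      = ∫ t in Ioi (-b), ((t+b)/t)^(2*k) * ρfun t := by
    have ieq : ∀ t : ℝ, hfun t ^ 2 * ρfun t
        = Set.indicator (Ioi (-b)) (fun t => ((t+b)/t)^(2*k) * ρfun t) t := by
      intro t
      rw [Set.indicator_apply]
      simp only [hhfun, mem_Ioi]
      split_ifs with h
      · rw [← pow_mul, mul_comm k 2]
      · rw [zero_pow two_ne_zero, zero_mul]
    simp_rw [ieq]
    rw [setIntegral_indicator measurableSet_Ioi, hinter]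
  have E2 : ∫ t in Ioi (0:ℝ), hfun t * ρfun t = E := by
    have ieq : ∀ t : ℝ, hfun t * ρfun t
        = Set.indicator (Ioi (-b)) (fun t => ((t+b)/t)^k * ρfun t) t := by
      intro t
      rw [Set.indicator_apply]
      simp only [hhfun, mem_Ioi]
      split_ifs with h
      · rfl
      · rw [zero_mul]
    simp_rw [ieq]
    rw [setIntegral_indicator measurableSet_Ioi, hinter]
    have e : ∀ t ∈ Ioi (-b), ((t+b)/t)^k * ρfun t
        = (α^(k+1)/Γr) * ((t+b)^k * Real.exp (-α * t)) := by
      intro t ht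
      have ht0 : (0:ℝ) < t := lt_trans hnb ht
      simp only [hρfun]
      rw [div_pow]
      field_simp
    rw [setIntegral_congr_fun measurableSet_Ioi e, integral_const_mul,
      int_shifted_pow_exp hα k, hE, hΓr]
    field_simp
    ring
    field_simp
    rw [← mul_pow, mul_one_div_cancel hα.ne', one_pow]
  have Emass : ∫ t in Ioi (0:ℝ), ρfun t = 1 := by
    rw [setIntegral_congr_fun measurableSet_Ioi
      (f := ρfun) (g := fun t => (α^(k+1)/Γr) * (t^k * Real.exp (-α * t)))
      (fun t _ => by simp only [hρfun]; ring), integral_const_mul, int_pow_exp_Ioi_zero hα k, hΓr]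
    field_simp
    rw [← mul_pow, mul_one_div_cancel hα.ne', one_pow]
  show (∫ t in Ioi (0:ℝ), (hfun t - E)^2 * ρfun t)
      = (∫ t in Ioi (-b), ((t+b)/t)^(2*k) * ρfun t) - E^2
  have step1 : (∫ t in Ioi (0:ℝ), (hfun t - E)^2 * ρfun t)
      = ∫ t in Ioi (0:ℝ),
          (hfun t ^ 2 * ρfun t - (2*E) * (hfun t * ρfun t) + E^2 * ρfun t) := by
    apply setIntegral_congr_fun measurableSet_Ioi
    intro t _
    ring
  have Isub : IntegrableOn
      (fun t => hfun t ^ 2 * ρfun t - (2*E) * (hfun t * ρfun t)) (Ioi 0) :=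
    Ih2ρ.sub (Ihρ.const_mul (2*E))
  rw [step1, integral_add Isub (Iρ.const_mul (E^2)),
    integral_sub Ih2ρ (Ihρ.const_mul (2*E)), integral_const_mul, E1, E2, integral_const_mul, Emass]
  ring


theorem umvue_cdf_second_moment_and_mse (n : ℕ) (hn : 2 ≤ n) (α x : ℝ)
    (hα : 0 < α) (hx : x ∈ Ioo (0:ℝ) 1) :
    (∫ t in Ioi (-(Real.log (2*x - x^2))),
        ((t + Real.log (2*x - x^2)) / t) ^ (2*(n-1))
          * (α^n * t^(n-1) * Real.exp (-α * t) / Real.Gamma n))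
      = (1 / Real.Gamma n)
          * ∑ i ∈ Finset.range (2*n - 1),
              (Nat.choose (2*n - 2) i : ℝ) * (Real.log (2*x - x^2)) ^ i * α ^ i
                * upperGamma ((n:ℝ) - i) (-α * Real.log (2*x - x^2)) ∧
    (∫ t in Ioi (0:ℝ),
        ((if -(Real.log (2*x - x^2)) < t then
            ((t + Real.log (2*x - x^2)) / t) ^ (n-1) else 0)
          - (2*x - x^2) ^ α) ^ 2
          * (α^n * t^(n-1) * Real.exp (-α * t) / Real.Gamma n))
      = (1 / Real.Gamma n)
          * (∑ i ∈ Finset.range (2*n - 1),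
              (Nat.choose (2*n - 2) i : ℝ) * (Real.log (2*x - x^2)) ^ i * α ^ i
                * upperGamma ((n:ℝ) - i) (-α * Real.log (2*x - x^2)))
        - (2*x - x^2) ^ (2*α) := by
  obtain ⟨hx0, hx1⟩ := hx
  have hy : 0 < 2*x - x^2 := by nlinarith
  have hy1 : 2*x - x^2 < 1 := by nlinarith
  set b := Real.log (2*x - x^2) with hbdef
  have hb : b < 0 := Real.log_neg hy hy1
  obtain ⟨k, rfl⟩ : ∃ k, n = k + 1 := ⟨n - 1, by omega⟩
  have e1 : 2*(k+1) - 1 = 2*k + 1 := by omega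
  have e2 : 2*(k+1) - 2 = 2*k := by omega
  have e3 : k + 1 - 1 = k := by omega
  rw [e1, e2, e3]
  push_cast
  have hF : (2*x - x^2) ^ α = Real.exp (α * b) := by
    rw [Real.rpow_def_of_pos hy, mul_comm]
  have hF2 : (2*x - x^2) ^ (2*α) = Real.exp (α * b) ^ 2 := by
    rw [Real.rpow_def_of_pos hy,
      show Real.exp (α*b)^2 = Real.exp (α*b) * Real.exp (α*b) from sq _, ← Real.exp_add]
    congr 1
    ring
  refine ⟨second_moment hα hb k, ?_⟩
  rw [hF, hF2, mse_lemma hα hb k, second_moment hα hb k]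
end
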